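/- Let 𝒢=(V,E) be a temporal graph, s,z∈V, and x,δ∈ℕ. If there is an x-starting-delay-robust (s,z)-route in 𝒢, then there is an x-starting-delay-robust (s,z)-route in which no vertex appears twice. -/

import Mathlib

/-- A time arc of a temporal graph: start vertex, end vertex, time label, traversal time. -/
structure TimeArc (V : Type) where
  src : V
  dst : V
  time : ℕ
  trav : ℕ
deriving DecidableEq

variable {V : Type}

/-- `P` is a `D`-traversal-delayed temporal walk in the temporal graph with time-arc set `E`
(with delay time `δ`). -/
def IsTDWalk [DecidableEq V] (E D : Finset (TimeArc V)) (δ : ℕ)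
    (P : List (TimeArc V)) : Prop :=
  (∀ e ∈ P, e ∈ E) ∧
  P.Chain' (fun e f => f.src = e.dst ∧
    e.time + e.trav + (if e ∈ D then δ else 0) ≤ f.time)

/-- `P` is a `D`-starting-delayed temporal walk in the temporal graph with time-arc set `E`
(with delay time `δ`). -/
def IsSDWalk [DecidableEq V] (E D : Finset (TimeArc V)) (δ : ℕ)
    (P : List (TimeArc V)) : Prop :=
  (∀ e ∈ P, e ∈ E) ∧
  P.Chain' (fun e f => f.src = e.dst ∧
    e.time + e.trav + (if e ∈ D then δ else 0) ≤ f.time + (if f ∈ D then δ else 0))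

/-- The sequence of vertices visited by a walk: the start vertex of its first arc followed by
the end vertices of all its arcs. -/
def visits : List (TimeArc V) → List V
  | [] => []
  | e :: es => e.src :: (e :: es).map TimeArc.dst

/-- The walk `P` follows the route `R`: the visited vertex sequence of `P` equals `R`
(the empty walk follows every single-vertex route). -/
def Follows (P : List (TimeArc V)) (R : List V) : Prop :=
  match P with
  | [] => ∃ v, R = [v]
  | e :: es => visits (e :: es) = R

/-- `R` is a `D`-traversal-delayed route: some `D`-traversal-delayed temporal walk follows `R`. -/
def IsTDRoute [DecidableEq V] (E D : Finset (TimeArc V)) (δ : ℕ) (R : List V) : Prop :=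
  ∃ P : List (TimeArc V), IsTDWalk E D δ P ∧ Follows P R

/-- `R` is a `D`-starting-delayed route: some `D`-starting-delayed temporal walk follows `R`. -/
def IsSDRoute [DecidableEq V] (E D : Finset (TimeArc V)) (δ : ℕ) (R : List V) : Prop :=
  ∃ P : List (TimeArc V), IsSDWalk E D δ P ∧ Follows P R

/-- `R` is `x`-traversal-delay-robust: it is a `D`-traversal-delayed route for every
`D ⊆ E` with `|D| ≤ x`. -/
def TDRobust [DecidableEq V] (E : Finset (TimeArc V)) (δ x : ℕ) (R : List V) : Prop :=
  ∀ D : Finset (TimeArc V), D ⊆ E → D.card ≤ x → IsTDRoute E D δ R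

/-- `R` is `x`-starting-delay-robust: it is a `D`-starting-delayed route for every
`D ⊆ E` with `|D| ≤ x`. -/
def SDRobust [DecidableEq V] (E : Finset (TimeArc V)) (δ x : ℕ) (R : List V) : Prop :=
  ∀ D : Finset (TimeArc V), D ⊆ E → D.card ≤ x → IsSDRoute E D δ R

private lemma sdwalk_tail {V : Type} [DecidableEq V] {E D : Finset (TimeArc V)} {δ : ℕ}
    {e : TimeArc V} {es : List (TimeArc V)} (h : IsSDWalk E D δ (e :: es)) :
    IsSDWalk E D δ es :=
  ⟨fun f hf => h.1 f (List.mem_cons_of_mem _ hf), h.2.tail⟩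

private lemma head?_append_cons_eq {V : Type} (A : List V) (v : V) (C C' : List V) :
    (A ++ v :: C).head? = (A ++ v :: C').head? := by
  cases A <;> simp

/-- Dropping the prefix of a walk, up to the position where the route reaches `v`
before its final `v :: C` segment. -/
private lemma dropPrefix {V : Type} [DecidableEq V] (E D : Finset (TimeArc V)) (δ : ℕ)
    (v : V) (C : List V) :
    ∀ (X : List V) (P : List (TimeArc V)), IsSDWalk E D δ P →
      Follows P (X ++ v :: C) →
      ∃ Q, IsSDWalk E D δ Q ∧ Follows Q (v :: C) ∧
        ∀ f ∈ Q.head?, ∀ e ∈ P.head?,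
          e.time + (if e ∈ D then δ else 0) ≤ f.time + (if f ∈ D then δ else 0) := by
  intro X
  induction X with
  | nil =>
    intro P hw hf
    exact ⟨P, hw, hf, by
      intro f hfm e he
      cases P with
      | nil => simp at hfm
      | cons g gs => simp at hfm he; subst hfm; subst he; omega⟩
  | cons a X' IH =>
    intro P hw hf
    cases P with
    | nil =>
      obtain ⟨w, hw'⟩ := hf
      simp at hw'
    | cons e P'' =>
      have hv : a :: X' ++ v :: C = e.src :: e.dst :: P''.map TimeArc.dst := by
        simpa [Follows, visits] using hf.symm
      have hv2 : X' ++ v :: C = e.dst :: P''.map TimeArc.dst := by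
        simpa using congrArg List.tail hv
      have hfoll : Follows P'' (X' ++ v :: C) := by
        cases P'' with
        | nil => exact ⟨e.dst, by simpa using hv2⟩
        | cons f0 P3 =>
          have hsrc : f0.src = e.dst := by
            have := (List.isChain_cons_cons.mp hw.2).1
            exact this.1
          show visits (f0 :: P3) = X' ++ v :: C
          rw [hv2, visits]
          simp [hsrc]
      obtain ⟨Q, hQw, hQf, hQh⟩ := IH P'' (sdwalk_tail hw) hfoll
      refine ⟨Q, hQw, hQf, ?_⟩
      intro f hfm e' he'
      simp at he'
      subst he'
      cases P'' with
      | nil =>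
        -- then the remaining route is a singleton, so Q = []
        exfalso
        have hsing : X' ++ v :: C = [e.dst] := by simpa using hv2
        have hC : C = [] := by
          have hlen := congrArg List.length hsing
          simp at hlen
          exact List.eq_nil_of_length_eq_zero (by omega)
        cases Q with
        | nil => simp at hfm
        | cons g gs =>
          have : visits (g :: gs) = v :: C := hQf
          rw [visits, hC] at this
          have := congrArg List.length this
          simp at this
      | cons f0 P3 =>
        have h1 := hQh f hfm f0 (by simp)
        have h2 := (List.isChain_cons_cons.mp hw.2).1.2
        omega

/-- Cutting a cycle out of a walk: if a walk follows `A ++ v :: B ++ v :: C`, then there is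
a walk following the shortcut route `A ++ v :: C`. -/
private lemma cutLemma {V : Type} [DecidableEq V] (E D : Finset (TimeArc V)) (δ : ℕ)
    (v : V) (B C : List V) :
    ∀ (A : List V) (P : List (TimeArc V)), IsSDWalk E D δ P →
      Follows P (A ++ v :: B ++ v :: C) →
      ∃ Q, IsSDWalk E D δ Q ∧ Follows Q (A ++ v :: C) ∧
        ∀ f ∈ Q.head?, ∀ e ∈ P.head?,
          e.time + (if e ∈ D then δ else 0) ≤ f.time + (if f ∈ D then δ else 0) := by
  intro A
  induction A with
  | nil =>
    intro P hw hf
    have hf' : Follows P ((v :: B) ++ v :: C) := by simpa using hf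
    obtain ⟨Q, hQw, hQf, hQh⟩ := dropPrefix E D δ v C (v :: B) P hw hf'
    exact ⟨Q, hQw, by simpa using hQf, hQh⟩
  | cons a A' IH =>
    intro P hw hf
    cases P with
    | nil =>
      obtain ⟨w, hw'⟩ := hf
      simp at hw'
    | cons e P'' =>
      have hv : a :: (A' ++ v :: B ++ v :: C) = e.src :: e.dst :: P''.map TimeArc.dst := by
        simpa [Follows, visits] using hf.symm
      have hsrc_a : e.src = a :=
        ((by simpa using congrArg List.head? hv : some a = some e.src).symm :
          some e.src = some a) |> Option.some.inj
      have hv2 : A' ++ v :: (B ++ v :: C) = e.dst :: P''.map TimeArc.dst := by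
        have := congrArg List.tail hv
        simpa [List.append_assoc] using this
      cases P'' with
      | nil =>
        exfalso
        have hlen := congrArg List.length hv2
        simp at hlen
        omega
      | cons f0 P3 =>
        have hsrc : f0.src = e.dst := (List.isChain_cons_cons.mp hw.2).1.1
        have hfoll : Follows (f0 :: P3) (A' ++ v :: B ++ v :: C) := by
          show visits (f0 :: P3) = A' ++ v :: B ++ v :: C
          have : A' ++ v :: B ++ v :: C = e.dst :: (f0 :: P3).map TimeArc.dst := by
            simpa [List.append_assoc] using hv2
          rw [this, visits]
          simp [hsrc]
        obtain ⟨Q, hQw, hQf, hQh⟩ := IH (f0 :: P3) (sdwalk_tail hw) hfoll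
        -- key source fact about the head of Q
        have hef : ∀ f ∈ Q.head?, f.src = e.dst := by
          intro f hfm
          cases Q with
          | nil => simp at hfm
          | cons g Q' =>
            have hfg : g = f := by simpa using hfm
            rw [← hfg]
            have h1 : (A' ++ v :: C).head? = some g.src := by
              have hx : visits (g :: Q') = A' ++ v :: C := hQf
              rw [visits] at hx
              exact (congrArg List.head? hx.symm).trans (by simp)
            have h2 : (A' ++ v :: (B ++ v :: C)).head? = some e.dst := by
              rw [hv2]; simp
            rw [head?_append_cons_eq A' v C (B ++ v :: C), h2] at h1
            exact (Option.some.inj h1).symm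
        have hrel := (List.isChain_cons_cons.mp hw.2).1
        refine ⟨e :: Q, ⟨?_, ?_⟩, ?_, ?_⟩
        · intro g hg
          rcases List.mem_cons.mp hg with rfl | hg'
          · exact hw.1 g (by simp)
          · exact hQw.1 g hg'
        · rw [show List.Chain' _ (e :: Q) ↔ _ from List.isChain_cons]
          refine ⟨?_, hQw.2⟩
          intro f hfm
          refine ⟨hef f hfm, ?_⟩
          have h1 := hQh f hfm f0 (by simp)
          have h2 := hrel.2
          omega
        · -- Follows (e :: Q) ((a :: A') ++ v :: C)
          cases Q with
          | nil =>
            obtain ⟨w, hww⟩ := hQf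
            rcases A' with _ | ⟨b, A''⟩
            · have h1 : v = w ∧ C = [] := by simpa using hww
              have hdst : e.dst = v := by
                have hx := congrArg List.head? hv2
                simp at hx
                exact hx.symm
              show visits [e] = ([a] : List V) ++ v :: C
              rw [h1.2, visits]
              simp [hsrc_a, hdst]
            · exfalso
              simp at hww
          | cons f Q' =>
            have hQf' : visits (f :: Q') = A' ++ v :: C := hQf
            show visits (e :: f :: Q') = (a :: A') ++ v :: C
            rw [visits] at hQf' ⊢
            have hfe : f.src = e.dst := hef f (by simp)
            simp only [List.map_cons] at hQf' ⊢
            rw [List.cons_append, ← hQf', hsrc_a, ← hfe]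
        · intro f hfm e0 he0
          simp at hfm he0
          subst hfm
          subst he0
          omega

private lemma pair_sublist_decomp {V : Type} {x : V} :
    ∀ {l : List V}, List.Sublist [x, x] l → ∃ A B C, l = A ++ x :: B ++ x :: C := by
  intro l h
  induction l with
  | nil => simp at h
  | cons b l ih =>
    cases h with
    | cons _ h' =>
      obtain ⟨A, B, C, rfl⟩ := ih h'
      exact ⟨b :: A, B, C, rfl⟩
    | cons_cons _ h' =>
      have hx : x ∈ l := List.singleton_sublist.mp h'
      obtain ⟨B, C, rfl⟩ := List.append_of_mem hx
      exact ⟨[], B, C, rfl⟩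

private lemma exists_dup_decomp {V : Type} {l : List V} (h : ¬ l.Nodup) :
    ∃ (a : V) (A B C : List V), l = A ++ a :: B ++ a :: C := by
  obtain ⟨a, ha⟩ := List.exists_duplicate_iff_not_nodup.mpr h
  obtain ⟨A, B, C, rfl⟩ := pair_sublist_decomp (List.duplicate_iff_sublist.mp ha)
  exact ⟨a, A, B, C, rfl⟩

theorem statement3 {V : Type} [DecidableEq V] (E : Finset (TimeArc V))
    (s z : V) (x δ : ℕ)
    (h : ∃ R : List V, R.head? = some s ∧ R.getLast? = some z ∧ SDRobust E δ x R) :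
    ∃ R : List V, R.head? = some s ∧ R.getLast? = some z ∧ R.Nodup ∧ SDRobust E δ x R := by
  obtain ⟨R, hh, hl, hrob⟩ := h
  have key : ∀ (n : ℕ) (R : List V), R.length ≤ n → R.head? = some s →
      R.getLast? = some z → SDRobust E δ x R →
      ∃ R' : List V, R'.head? = some s ∧ R'.getLast? = some z ∧ R'.Nodup ∧ SDRobust E δ x R' := by
    intro n
    induction n with
    | zero =>
      intro R hlen hh
      have hR : R = [] := List.eq_nil_of_length_eq_zero (Nat.le_zero.mp hlen)
      subst hR
      simp at hh
    | succ n IH =>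
      intro R hlen hh hl hrob
      by_cases hnd : R.Nodup
      · exact ⟨R, hh, hl, hnd, hrob⟩
      · obtain ⟨a, A, B, C, rfl⟩ := exists_dup_decomp hnd
        have hrob' : SDRobust E δ x (A ++ a :: C) := by
          intro D hD hcard
          obtain ⟨P, hw, hf⟩ := hrob D hD hcard
          obtain ⟨Q, hQw, hQf, -⟩ := cutLemma E D δ a B C A P hw hf
          exact ⟨Q, hQw, hQf⟩
        apply IH (A ++ a :: C)
        · have := hlen
          simp [List.length_append] at this ⊢
          omega
        · rw [← hh]
          exact (head?_append_cons_eq A a C (B ++ a :: C)).trans (by rw [List.append_assoc]; rfl)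
        · rw [← hl, List.getLast?_append_cons A a C]
          have : A ++ a :: B ++ a :: C = (A ++ a :: B) ++ a :: C := by simp
          rw [this, List.getLast?_append_cons]
        · exact hrob'
  exact key R.length R le_rfl hh hl hrob
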